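/- Let k₁ ∈ ℂ with Re(k₁) = 0 and Im(k₁) ≠ 0, and let c₁, c₂ ∈ ℂ with |c₁| ≠ |c₂|. Then for all real x and τ₂, the denominator |c₁|² e^{4i Im(k₁) x} e^{-8 Re(k₁) Im(k₁) τ₂} - |c₂|² is nonzero; i.e., the one-soliton solution q(x,τ₂) = -4i c₁ c₂ Im(k₁) e^{2k₁x + 2i k₁² τ₂} / (|c₁|² e^{4i Im(k₁)x} e^{-8 Re(k₁) Im(k₁) τ₂} - |c₂|²) is nonsingular. -/

import Mathlib

open Complex

theorem sub_ne_zero_of_norm_ne_of_norm_eq_one {𝕜 : Type*} [NormedDivisionRing 𝕜] {a b w : 𝕜}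
    (hw : ‖w‖ = 1) (hab : ‖a‖ ≠ ‖b‖) : a * w - b ≠ 0 := by
  intro h
  apply hab
  simpa [norm_mul, hw] using congrArg norm (sub_eq_zero.mp h)

theorem stmt_6_general (k₁ c₁ c₂ : ℂ) (hre : k₁.re = 0)
    (habs : ‖c₁‖ ≠ ‖c₂‖) :
    ∀ x τ₂ : ℝ,
      ((‖c₁‖ : ℂ) ^ 2 * Complex.exp (4 * Complex.I * (k₁.im : ℂ) * (x : ℂ)) *
          Complex.exp (-8 * (k₁.re : ℂ) * (k₁.im : ℂ) * (τ₂ : ℂ)) -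
        (‖c₂‖ : ℂ) ^ 2) ≠ 0 := by
  intro x τ₂
  have hphase : ‖exp (4 * I * (k₁.im : ℂ) * (x : ℂ))‖ = 1 := by
    have : 4 * I * (k₁.im : ℂ) * (x : ℂ) = ((4 * k₁.im * x : ℝ) : ℂ) * I := by push_cast; ring
    rw [this, norm_exp_ofReal_mul_I]
  have hsq : ‖(‖c₁‖ : ℂ) ^ 2‖ ≠ ‖(‖c₂‖ : ℂ) ^ 2‖ := by
    simpa [norm_pow, norm_real, pow_left_inj₀ (norm_nonneg c₁) (norm_nonneg c₂) two_ne_zero]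
      using habs
  -- `hre` turns the second exponential into `exp 0 = 1`.
  simpa [hre] using sub_ne_zero_of_norm_ne_of_norm_eq_one hphase hsq

/-- For `k₁` purely imaginary with nonzero imaginary part and `|c₁| ≠ |c₂|`, the
denominator of the nonlocal focusing one-soliton solution never vanishes. -/
theorem stmt_6 (k₁ c₁ c₂ : ℂ) (hre : k₁.re = 0) (him : k₁.im ≠ 0)
    (habs : ‖c₁‖ ≠ ‖c₂‖) :
    ∀ x τ₂ : ℝ,
      ((‖c₁‖ : ℂ) ^ 2 * Complex.exp (4 * Complex.I * (k₁.im : ℂ) * (x : ℂ)) *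
          Complex.exp (-8 * (k₁.re : ℂ) * (k₁.im : ℂ) * (τ₂ : ℂ)) -
        (‖c₂‖ : ℂ) ^ 2) ≠ 0 :=
  stmt_6_general k₁ c₁ c₂ hre habs
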